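/- Let {N^x}_{x∈X} and {M^x}_{x∈X} be finite families of quantum channels from A to B, and let p_X be a probability distribution on the finite set X. If the generalized divergence D obeys the direct-sum property on classical-quantum states, then the amortized channel divergence is jointly convex: Σ_x p_X(x) · D^A(N^x‖M^x) ≥ D^A(N̄‖M̄), where N̄ := Σ_x p_X(x) N^x and M̄ := Σ_x p_X(x) M^x. -/

import Mathlib

open scoped BigOperators ComplexOrder

noncomputable section

attribute [local instance] Classical.propDecidable

/-- A density matrix (quantum state): positive semidefinite with unit trace. -/
def IsDensity {ι : Type} [Fintype ι] (ρ : Matrix ι ι ℂ) : Prop :=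
  ρ.PosSemidef ∧ ρ.trace = 1

/-- The map `id_R ⊗ Φ` (for linear `Φ`), defined blockwise. -/
def idTensor {R ι κ : Type} (Φ : Matrix ι ι ℂ → Matrix κ κ ℂ)
    (X : Matrix (R × ι) (R × ι) ℂ) : Matrix (R × κ) (R × κ) ℂ :=
  fun p q => Φ (fun a b => X (p.1, a) (q.1, b)) p.2 q.2

/-- The map `Φ ⊗ id_E` (for linear `Φ`), defined blockwise. -/
def tensorId {ι κ E : Type} (Φ : Matrix ι ι ℂ → Matrix κ κ ℂ)
    (X : Matrix (ι × E) (ι × E) ℂ) : Matrix (κ × E) (κ × E) ℂ :=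
  fun p q => Φ (fun a b => X (a, p.2) (b, q.2)) p.1 q.1

/-- A quantum channel: linear, trace preserving, and completely positive. -/
structure IsChannel {ι κ : Type} [Fintype ι] [Fintype κ]
    (Φ : Matrix ι ι ℂ → Matrix κ κ ℂ) : Prop where
  linear : IsLinearMap ℂ Φ
  tracePres : ∀ X, (Φ X).trace = X.trace
  compPos : ∀ (k : ℕ) (X : Matrix (Fin k × ι) (Fin k × ι) ℂ),
      X.PosSemidef → (idTensor Φ X).PosSemidef

/-- A family of divergences, one for every finite dimension. -/
abbrev DivFam : Type 1 :=
  ∀ (ι : Type) [Fintype ι] [DecidableEq ι], Matrix ι ι ℂ → Matrix ι ι ℂ → EReal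

/-- Data processing: a generalized divergence does not increase under channels. -/
def DivDataProcessing (D : DivFam) : Prop :=
  ∀ (ι κ : Type) [Fintype ι] [DecidableEq ι] [Fintype κ] [DecidableEq κ]
    (Φ : Matrix ι ι ℂ → Matrix κ κ ℂ), IsChannel Φ →
    ∀ ρ σ : Matrix ι ι ℂ, IsDensity ρ → IsDensity σ →
      D κ (Φ ρ) (Φ σ) ≤ D ι ρ σ

/-- Faithfulness: `D(ρ‖ρ) ≤ 0` for every state `ρ`. -/
def DivFaithful (D : DivFam) : Prop :=
  ∀ (ι : Type) [Fintype ι] [DecidableEq ι] (ρ : Matrix ι ι ℂ),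
    IsDensity ρ → D ι ρ ρ ≤ 0

/-- Strong faithfulness: `D(ρ‖σ) = 0` iff `ρ = σ`. -/
def DivStronglyFaithful (D : DivFam) : Prop :=
  ∀ (ι : Type) [Fintype ι] [DecidableEq ι] (ρ σ : Matrix ι ι ℂ),
    IsDensity ρ → IsDensity σ → (D ι ρ σ = 0 ↔ ρ = σ)

/-- The generalized channel divergence `D(N‖M)`. -/
def channelDiv (D : DivFam) {ι κ : Type} [Fintype ι] [DecidableEq ι] [Fintype κ] [DecidableEq κ]
    (N M : Matrix ι ι ℂ → Matrix κ κ ℂ) : EReal :=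
  ⨆ (R : ℕ) (ρ : Matrix (Fin R × ι) (Fin R × ι) ℂ) (_ : IsDensity ρ),
    D (Fin R × κ) (idTensor N ρ) (idTensor M ρ)

/-- The amortized channel divergence `D^𝒜(N‖M)`. -/
def amortizedDiv (D : DivFam) {ι κ : Type} [Fintype ι] [DecidableEq ι] [Fintype κ] [DecidableEq κ]
    (N M : Matrix ι ι ℂ → Matrix κ κ ℂ) : EReal :=
  ⨆ (R : ℕ) (ρ : Matrix (Fin R × ι) (Fin R × ι) ℂ) (σ : Matrix (Fin R × ι) (Fin R × ι) ℂ)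
    (_ : IsDensity ρ) (_ : IsDensity σ),
      D (Fin R × κ) (idTensor N ρ) (idTensor M σ) - D (Fin R × ι) ρ σ

/-- Apply a real function to a Hermitian matrix via the spectral decomposition. -/
def hermFun {ι : Type} [Fintype ι] [DecidableEq ι] (f : ℝ → ℝ) (A : Matrix ι ι ℂ) :
    Matrix ι ι ℂ :=
  if hA : A.IsHermitian then
    (hA.eigenvectorUnitary : Matrix ι ι ℂ) *
      Matrix.diagonal (fun i => (f (hA.eigenvalues i) : ℂ)) *
      star (hA.eigenvectorUnitary : Matrix ι ι ℂ)
  else 0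

/-- Real matrix power via spectral calculus, with the generalized-inverse convention `0 ↦ 0`. -/
def matPow {ι : Type} [Fintype ι] [DecidableEq ι] (A : Matrix ι ι ℂ) (r : ℝ) : Matrix ι ι ℂ :=
  hermFun (fun x => if x = 0 then 0 else Real.rpow x r) A

/-- Matrix base-2 logarithm via spectral calculus, taken on the support. -/
def matLog2 {ι : Type} [Fintype ι] [DecidableEq ι] (A : Matrix ι ι ℂ) : Matrix ι ι ℂ :=
  hermFun (fun x => if x = 0 then 0 else Real.logb 2 x) A

/-- The projection onto the support of a Hermitian matrix. -/
def suppProj {ι : Type} [Fintype ι] [DecidableEq ι] (A : Matrix ι ι ℂ) : Matrix ι ι ℂ :=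
  hermFun (fun x => if x = 0 then 0 else 1) A

/-- `supp ρ ⊆ supp σ`, expressed (for Hermitian matrices) as kernel containment
`ker σ ⊆ ker ρ`. -/
def suppLE {ι : Type} [Fintype ι] (ρ σ : Matrix ι ι ℂ) : Prop :=
  ∀ v : ι → ℂ, σ.mulVec v = 0 → ρ.mulVec v = 0

/-- The quantum relative entropy `D(ρ‖σ) = Tr[ρ(log₂ρ − log₂σ)]`,
`+∞` if the support condition fails. -/
def relEnt {ι : Type} [Fintype ι] [DecidableEq ι] (ρ σ : Matrix ι ι ℂ) : EReal :=
  if suppLE ρ σ then (((ρ * (matLog2 ρ - matLog2 σ)).trace).re : EReal) else ⊤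

/-- `−log₂ x` as an extended real, with `−log₂ 0 = +∞`. -/
def negLog2 (x : ℝ) : EReal :=
  if x ≤ 0 then ⊤ else ((-Real.logb 2 x : ℝ) : EReal)

/-- The max-relative entropy `D_max(ρ‖σ) = inf{λ : ρ ≤ 2^λ σ}` (Loewner order). -/
def Dmax {ι : Type} [Fintype ι] (ρ σ : Matrix ι ι ℂ) : EReal :=
  ⨅ (l : ℝ) (_ : (((2 : ℝ) ^ l) • σ - ρ).PosSemidef), (l : EReal)

/-- The sandwiched Rényi divergence `D̃_α`. -/
def sandRenyi {ι : Type} [Fintype ι] [DecidableEq ι] (α : ℝ) (ρ σ : Matrix ι ι ℂ) : EReal :=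
  if α = 1 then relEnt ρ σ
  else if 1 < α ∧ ¬ suppLE ρ σ then ⊤
  else if α < 1 ∧ (ρ * σ).trace = 0 then ⊤
  else ((((α - 1)⁻¹ *
      Real.logb 2
        (((matPow (matPow σ ((1 - α) / (2 * α)) * ρ * matPow σ ((1 - α) / (2 * α))) α).trace).re)) :
        ℝ) : EReal)

/-- The Petz–Rényi divergence `D_α`. -/
def petzRenyi {ι : Type} [Fintype ι] [DecidableEq ι] (α : ℝ) (ρ σ : Matrix ι ι ℂ) : EReal :=
  if α = 0 then negLog2 (((suppProj ρ * σ).trace).re)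
  else if α = 1 then relEnt ρ σ
  else if 1 < α ∧ ¬ suppLE ρ σ then ⊤
  else if α < 1 ∧ (ρ * σ).trace = 0 then ⊤
  else ((((α - 1)⁻¹ * Real.logb 2 (((matPow ρ α * matPow σ (1 - α)).trace).re)) : ℝ) : EReal)

/-- The trace norm `‖X‖₁ = Tr √(XᴴX)`. -/
def traceNorm {ι : Type} [Fintype ι] [DecidableEq ι] (X : Matrix ι ι ℂ) : ℝ :=
  ((matPow (X.conjTranspose * X) (1/2 : ℝ)).trace).re

/-- The fidelity `F(ρ,σ) = ‖√ρ√σ‖₁²`. -/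
def matFidelity {ι : Type} [Fintype ι] [DecidableEq ι] (ρ σ : Matrix ι ι ℂ) : ℝ :=
  (traceNorm (matPow ρ (1/2 : ℝ) * matPow σ (1/2 : ℝ))) ^ 2

def relEntFam : DivFam := fun _ _ _ ρ σ => relEnt ρ σ
def DmaxFam : DivFam := fun _ _ _ ρ σ => Dmax ρ σ
def sandFam (α : ℝ) : DivFam := fun _ _ _ ρ σ => sandRenyi α ρ σ
def petzFam (α : ℝ) : DivFam := fun _ _ _ ρ σ => petzRenyi α ρ σ
/-- `D̃_{1/2}(ρ‖σ) = −log₂ F(ρ,σ)` as a divergence family. -/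
def fidDivFam : DivFam := fun _ _ _ ρ σ => negLog2 (matFidelity ρ σ)

/-- The classical-quantum state `Σ_x p(x) |x⟩⟨x| ⊗ ρ^x`. -/
def cqState {X ι : Type} [DecidableEq X] (p : X → ℝ) (ρ : X → Matrix ι ι ℂ) :
    Matrix (X × ι) (X × ι) ℂ :=
  fun a b => if a.1 = b.1 then (p a.1 : ℂ) * ρ a.1 a.2 b.2 else 0

/-- The direct-sum property of a generalized divergence on classical-quantum states. -/
def DivDirectSum (D : DivFam) : Prop :=
  ∀ (X ι : Type) [Fintype X] [DecidableEq X] [Fintype ι] [DecidableEq ι]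
    (p : X → ℝ), (∀ x, 0 ≤ p x) → (∑ x, p x = 1) →
    ∀ (ρ σ : X → Matrix ι ι ℂ), (∀ x, IsDensity (ρ x)) → (∀ x, IsDensity (σ x)) →
      D (X × ι) (cqState p ρ) (cqState p σ) = ∑ x, (p x : EReal) * D ι (ρ x) (σ x)

/-- The Kronecker (tensor) product of square matrices. -/
def mkron {ι E : Type} (A : Matrix ι ι ℂ) (B : Matrix E E ℂ) : Matrix (ι × E) (ι × E) ℂ :=
  fun p q => A p.1 q.1 * B p.2 q.2

/-- Sub-additivity of a divergence with respect to tensor-product states. -/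
def DivSubAdditive (D : DivFam) : Prop :=
  ∀ (ι E : Type) [Fintype ι] [DecidableEq ι] [Fintype E] [DecidableEq E]
    (ρ σ : Matrix ι ι ℂ) (ω τ : Matrix E E ℂ),
    IsDensity ρ → IsDensity σ → IsDensity ω → IsDensity τ →
      D (ι × E) (mkron ρ ω) (mkron σ τ) ≤ D ι ρ σ + D E ω τ

/-- The classical-quantum channel `ρ ↦ Σ_x ⟨x|ρ|x⟩ ν^x`. -/
def cqChannel {X κ : Type} [Fintype X] [Fintype κ] (ν : X → Matrix κ κ ℂ) :
    Matrix X X ℂ → Matrix κ κ ℂ :=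
  fun ρ => ∑ x, ρ x x • ν x

/-- The maximally entangled state of Schmidt rank `|ι|` on `ι × ι`. -/
def maxEnt (ι : Type) [Fintype ι] [DecidableEq ι] : Matrix (ι × ι) (ι × ι) ℂ :=
  fun p q => if p.1 = p.2 ∧ q.1 = q.2 then ((Fintype.card ι : ℂ))⁻¹ else 0

/-- An `(m+1)`-round adaptive channel discrimination protocol: registers `R_0, …, R_m`,
a shared initial state, adaptive channels between channel uses, and a final measurement. -/
structure Protocol (ι κ : Type) [Fintype ι] [DecidableEq ι] [Fintype κ] [DecidableEq κ]
    (m : ℕ) where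
  r : ℕ → ℕ
  init : Matrix (Fin (r 0) × ι) (Fin (r 0) × ι) ℂ
  init_density : IsDensity init
  adapt : ∀ i : ℕ, Matrix (Fin (r i) × κ) (Fin (r i) × κ) ℂ →
      Matrix (Fin (r (i + 1)) × ι) (Fin (r (i + 1)) × ι) ℂ
  adapt_channel : ∀ i, i < m → IsChannel (adapt i)
  meas : Matrix (Fin (r m) × κ) (Fin (r m) × κ) ℂ
  meas_psd : meas.PosSemidef
  meas_le_one : ((1 : Matrix (Fin (r m) × κ) (Fin (r m) × κ) ℂ) - meas).PosSemidef

namespace Protocol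

variable {ι κ : Type} [Fintype ι] [DecidableEq ι] [Fintype κ] [DecidableEq κ] {m : ℕ}

/-- The state on `R_i ⊗ A` just before the `(i+1)`-st channel use, when the channel is `Ch`. -/
def evolve (P : Protocol ι κ m) (Ch : Matrix ι ι ℂ → Matrix κ κ ℂ) :
    (i : ℕ) → Matrix (Fin (P.r i) × ι) (Fin (P.r i) × ι) ℂ
  | 0 => P.init
  | (i + 1) => P.adapt i (idTensor Ch (P.evolve Ch i))

/-- The final state on `R_m ⊗ B` after all `m + 1` channel uses. -/
def final (P : Protocol ι κ m) (Ch : Matrix ι ι ℂ → Matrix κ κ ℂ) :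
    Matrix (Fin (P.r m) × κ) (Fin (P.r m) × κ) ℂ :=
  idTensor Ch (P.evolve Ch m)

/-- The probability of accepting (deciding for the null hypothesis). -/
def acceptProb (P : Protocol ι κ m) (Ch : Matrix ι ι ℂ → Matrix κ κ ℂ) : ℝ :=
  ((P.meas * P.final Ch).trace).re

/-- The type I error probability `Tr[(I − Q) ρ'⁽ⁿ⁾]`. -/
def typeI (P : Protocol ι κ m) (N : Matrix ι ι ℂ → Matrix κ κ ℂ) : ℝ :=
  ((((1 : Matrix (Fin (P.r m) × κ) (Fin (P.r m) × κ) ℂ) - P.meas) * P.final N).trace).re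

/-- The type II error probability `Tr[Q τ'⁽ⁿ⁾]`. -/
def typeII (P : Protocol ι κ m) (M : Matrix ι ι ℂ → Matrix κ κ ℂ) : ℝ :=
  ((P.meas * P.final M).trace).re

end Protocol

/-- The binary (classical) state `diag(p, 1−p)`. -/
def binState (p : ℝ) : Matrix (Fin 2) (Fin 2) ℂ :=
  Matrix.diagonal (fun i => if i = 0 then (p : ℂ) else ((1 - p : ℝ) : ℂ))

/-- The binary entropy `h₂(ε)`. -/
def h2 (ε : ℝ) : ℝ := -(ε * Real.logb 2 ε) - (1 - ε) * Real.logb 2 (1 - ε)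

/-- `ζ_n(ε, N, M)` with `n = m + 1`: the optimal type II error exponent among all
`(m+1)`-round adaptive protocols with type I error at most `ε`. -/
def steinExp {ι κ : Type} [Fintype ι] [DecidableEq ι] [Fintype κ] [DecidableEq κ]
    (N M : Matrix ι ι ℂ → Matrix κ κ ℂ) (m : ℕ) (ε : ℝ) : EReal :=
  ⨆ (P : Protocol ι κ m) (_ : P.typeI N ≤ ε),
    (((m + 1 : ℝ))⁻¹ : EReal) * negLog2 (P.typeII M)

/-- Partial trace over the (left) reference system. -/
def ptraceLeft {R ι : Type} [Fintype R] (ψ : Matrix (R × ι) (R × ι) ℂ) : Matrix ι ι ℂ :=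
  fun a b => ∑ r, ψ (r, a) (r, b)

/-- The energy-constrained generalized channel divergence. -/
def eChannelDiv (D : DivFam) {ι κ : Type} [Fintype ι] [DecidableEq ι] [Fintype κ] [DecidableEq κ]
    (H : Matrix ι ι ℂ) (E : ℝ) (N M : Matrix ι ι ℂ → Matrix κ κ ℂ) : EReal :=
  ⨆ (R : ℕ) (ψ : Matrix (Fin R × ι) (Fin R × ι) ℂ) (_ : IsDensity ψ)
    (_ : ((H * ptraceLeft ψ).trace).re ≤ E),
      D (Fin R × κ) (idTensor N ψ) (idTensor M ψ)

/-- The energy-constrained amortized channel divergence. -/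
def eAmortizedDiv (D : DivFam) {ι κ : Type} [Fintype ι] [DecidableEq ι] [Fintype κ] [DecidableEq κ]
    (H : Matrix ι ι ℂ) (E : ℝ) (N M : Matrix ι ι ℂ → Matrix κ κ ℂ) : EReal :=
  ⨆ (R : ℕ) (ρ : Matrix (Fin R × ι) (Fin R × ι) ℂ) (σ : Matrix (Fin R × ι) (Fin R × ι) ℂ)
    (_ : IsDensity ρ) (_ : IsDensity σ)
    (_ : ((H * ptraceLeft ρ).trace).re ≤ E) (_ : ((H * ptraceLeft σ).trace).re ≤ E),
      D (Fin R × κ) (idTensor N ρ) (idTensor M σ) - D (Fin R × ι) ρ σ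

/-- `sup_α(ρ/σ)`: supremum of `Tr[Λρ]/Tr[Λσ]` over Hermitian `Λ` with `α⁻¹ I ≤ Λ ≤ I`. -/
def hilbertSup {ι : Type} [Fintype ι] [DecidableEq ι] (α : ℝ) (ρ σ : Matrix ι ι ℂ) : ℝ :=
  sSup { t : ℝ | ∃ Λ : Matrix ι ι ℂ, Λ.IsHermitian ∧
    (Λ - (α⁻¹ : ℝ) • (1 : Matrix ι ι ℂ)).PosSemidef ∧
    ((1 : Matrix ι ι ℂ) - Λ).PosSemidef ∧
    t = ((Λ * ρ).trace).re / ((Λ * σ).trace).re }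

/-- The Hilbert `α`-divergence `H_α(ρ‖σ)`, with `H₁(ρ‖σ) = ‖ρ−σ‖₁ / (2 ln 2)`. -/
def hilbertDiv {ι : Type} [Fintype ι] [DecidableEq ι] (α : ℝ) (ρ σ : Matrix ι ι ℂ) : ℝ :=
  if α = 1 then (2 * Real.log 2)⁻¹ * traceNorm (ρ - σ)
  else (α / (α - 1)) * Real.logb 2 (hilbertSup α ρ σ)


/-!
Averaging the channels is the partial trace over the classical register `X` of the
classical-quantum state `∑ₓ p(x) |x⟩⟨x| ⊗ Nˣ(ρ)`. Data processing under this partial trace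
followed by the direct-sum property makes `D` jointly convex on the channel outputs; since the
subtracted term `D(ρ‖σ)` is the same for every `x` and `∑ₓ p(x) = 1`, it can be moved inside the
convex combination, where each summand is bounded by the amortized divergence of `Nˣ, Mˣ`.
-/

open Matrix

namespace EReal

@[norm_cast]
lemma coe_finset_sum {X : Type} (s : Finset X) (f : X → ℝ) :
    ((∑ x ∈ s, f x : ℝ) : EReal) = ∑ x ∈ s, (f x : EReal) :=
  map_sum (⟨⟨(↑), coe_zero⟩, coe_add⟩ : ℝ →+ EReal) f s

variable {X : Type} [Fintype X] {p : X → ℝ}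

lemma sub_bot_le_of_forall_sub_coe_le {a b : EReal} (h : ∀ r : ℝ, a - r ≤ b) : a - ⊥ ≤ b := by
  induction a with
  | bot => simp
  | top => simpa using h 0
  | coe a =>
    have hb : b = ⊤ := (eq_top_iff_forall_lt b).2 fun y =>
      calc (y : EReal) < ((y + 1 : ℝ) : EReal) := by exact_mod_cast lt_add_one y
        _ = ((a - (a - y - 1) : ℝ) : EReal) := by ring_nf
        _ ≤ b := h (a - y - 1)
    simp [hb]

lemma sum_mul_sub_coe_le (hp : ∀ x, 0 ≤ p x) (hp1 : ∑ x, p x = 1) (f : X → EReal) (r : ℝ) :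
    (∑ x, (p x : EReal) * f x) - r ≤ ∑ x, (p x : EReal) * (f x - r) := by
  refine sub_le_of_le_add (le_of_eq ?_)
  calc ∑ x, (p x : EReal) * f x
        = ∑ x, ((p x : EReal) * (f x - r) + ((p x * r : ℝ) : EReal)) := by
        refine Finset.sum_congr rfl fun x _ => ?_
        rw [mul_sub_of_nonneg_of_ne_top (by exact_mod_cast hp x) (coe_ne_top _), ← coe_mul,
          sub_add_cancel]
    _ = (∑ x, (p x : EReal) * (f x - r)) + r := by
        rw [Finset.sum_add_distrib, ← coe_finset_sum, ← Finset.sum_mul, hp1, one_mul]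

lemma sum_mul_sub_le (hp : ∀ x, 0 ≤ p x) (hp1 : ∑ x, p x = 1) (f : X → EReal) (c : EReal) :
    (∑ x, (p x : EReal) * f x) - c ≤ ∑ x, (p x : EReal) * (f x - c) := by
  induction c with
  | top => simp
  | coe r => exact sum_mul_sub_coe_le hp hp1 f r
  | bot =>
    refine sub_bot_le_of_forall_sub_coe_le fun r => (sum_mul_sub_coe_le hp hp1 f r).trans ?_
    exact Finset.sum_le_sum fun x _ =>
      mul_le_mul_of_nonneg_left (sub_le_sub le_rfl bot_le) (by exact_mod_cast hp x)

end EReal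

section PartialTrace

variable {R Z ι : Type} [Fintype Z]

lemma idTensor_ptraceLeft (Y : Matrix (R × (Z × ι)) (R × (Z × ι)) ℂ) :
    idTensor ptraceLeft Y =
      ∑ z : Z, Y.submatrix (fun q => (q.1, (z, q.2))) (fun q => (q.1, (z, q.2))) := by
  ext q q'
  simp [idTensor, ptraceLeft, Matrix.sum_apply]

lemma isChannel_ptraceLeft [Fintype ι] : IsChannel (ptraceLeft (R := Z) (ι := ι)) where
  linear := ⟨fun ψ φ => by ext; simp [ptraceLeft, Finset.sum_add_distrib],
    fun c ψ => by ext; simp [ptraceLeft, Finset.mul_sum]⟩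
  tracePres ψ := by
    simp only [trace, diag, ptraceLeft, Fintype.sum_prod_type]
    exact Finset.sum_comm
  compPos k Y hY := by
    rw [idTensor_ptraceLeft]
    exact posSemidef_sum _ fun z _ => hY.submatrix _

end PartialTrace

section ClassicalQuantum

variable {X ι : Type} [Fintype X] [DecidableEq X]

open scoped Kronecker in
lemma cqState_eq_sum_kronecker (p : X → ℝ) (ρ : X → Matrix ι ι ℂ) :
    cqState p ρ = ∑ x, diagonal (Pi.single x (p x : ℂ)) ⊗ₖ ρ x := by
  ext a b
  simp [cqState, Matrix.sum_apply, diagonal_apply, Pi.single_apply]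

lemma isDensity_cqState [Fintype ι] {p : X → ℝ} (hp : ∀ x, 0 ≤ p x) (hp1 : ∑ x, p x = 1)
    {ρ : X → Matrix ι ι ℂ} (hρ : ∀ x, IsDensity (ρ x)) : IsDensity (cqState p ρ) := by
  refine ⟨?_, ?_⟩
  · rw [cqState_eq_sum_kronecker]
    refine posSemidef_sum _ fun x _ => PosSemidef.kronecker ?_ (hρ x).1
    exact PosSemidef.diagonal (Pi.single_nonneg.2 (by exact_mod_cast hp x))
  · simp [cqState_eq_sum_kronecker, trace_sum, trace_kronecker, (hρ _).2]
    exact_mod_cast hp1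

lemma ptraceLeft_cqState (p : X → ℝ) (ρ : X → Matrix ι ι ℂ) :
    ptraceLeft (cqState p ρ) = ∑ x, (p x : ℂ) • ρ x := by
  ext a b
  simp [ptraceLeft, cqState, Matrix.sum_apply]

end ClassicalQuantum

section ChannelOutputs

variable {ι κ : Type}

lemma trace_idTensor {R : Type} [Fintype R] [Fintype ι] [Fintype κ]
    {Φ : Matrix ι ι ℂ → Matrix κ κ ℂ} (hΦ : ∀ Y, (Φ Y).trace = Y.trace)
    (ρ : Matrix (R × ι) (R × ι) ℂ) : (idTensor Φ ρ).trace = ρ.trace := by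
  simp only [trace, diag, idTensor, Fintype.sum_prod_type]
  exact Finset.sum_congr rfl fun r _ => hΦ _

lemma IsChannel.isDensity_idTensor [Fintype ι] [Fintype κ] {Φ : Matrix ι ι ℂ → Matrix κ κ ℂ}
    (hΦ : IsChannel Φ) {R : ℕ} {ρ : Matrix (Fin R × ι) (Fin R × ι) ℂ} (hρ : IsDensity ρ) :
    IsDensity (idTensor Φ ρ) :=
  ⟨hΦ.compPos R ρ hρ.1, by rw [trace_idTensor hΦ.tracePres, hρ.2]⟩

lemma idTensor_sum_smul {R X : Type} [Fintype X] (p : X → ℝ)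
    (N : X → Matrix ι ι ℂ → Matrix κ κ ℂ) (ρ : Matrix (R × ι) (R × ι) ℂ) :
    idTensor (fun Y => ∑ x, (p x : ℂ) • N x Y) ρ = ∑ x, (p x : ℂ) • idTensor (N x) ρ := by
  ext q q'
  simp [idTensor, Matrix.sum_apply]

end ChannelOutputs

lemma DivDirectSum.jointly_convex {D : DivFam} (hds : DivDirectSum D)
    (hdp : DivDataProcessing D)
    {X ι : Type} [Fintype X] [DecidableEq X] [Fintype ι] [DecidableEq ι]
    {p : X → ℝ} (hp : ∀ x, 0 ≤ p x) (hp1 : ∑ x, p x = 1) {ρ σ : X → Matrix ι ι ℂ}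
    (hρ : ∀ x, IsDensity (ρ x)) (hσ : ∀ x, IsDensity (σ x)) :
    D ι (∑ x, (p x : ℂ) • ρ x) (∑ x, (p x : ℂ) • σ x) ≤ ∑ x, (p x : EReal) * D ι (ρ x) (σ x) := by
  rw [← ptraceLeft_cqState, ← ptraceLeft_cqState, ← hds X ι p hp hp1 ρ σ hρ hσ]
  exact hdp _ _ _ isChannel_ptraceLeft _ _ (isDensity_cqState hp hp1 hρ)
    (isDensity_cqState hp hp1 hσ)

lemma le_amortizedDiv (D : DivFam) {ι κ : Type} [Fintype ι] [DecidableEq ι] [Fintype κ]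
    [DecidableEq κ] (N M : Matrix ι ι ℂ → Matrix κ κ ℂ) {R : ℕ}
    {ρ σ : Matrix (Fin R × ι) (Fin R × ι) ℂ} (hρ : IsDensity ρ) (hσ : IsDensity σ) :
    D (Fin R × κ) (idTensor N ρ) (idTensor M σ) - D (Fin R × ι) ρ σ ≤ amortizedDiv D N M :=
  le_iSup_of_le R <| le_iSup_of_le ρ <| le_iSup_of_le σ <| le_iSup_of_le hρ <|
    le_iSup_of_le hσ le_rfl

theorem amortizedDiv_jointly_convex_general
    (D : DivFam) (hdp : DivDataProcessing D) (hds : DivDirectSum D)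
    {X ι κ : Type} [Fintype X]
    [Fintype ι] [DecidableEq ι] [Fintype κ] [DecidableEq κ]
    (p : X → ℝ) (hp : ∀ x, 0 ≤ p x) (hp1 : ∑ x, p x = 1)
    (N M : X → Matrix ι ι ℂ → Matrix κ κ ℂ)
    (hN : ∀ x, IsChannel (N x)) (hM : ∀ x, IsChannel (M x)) :
    amortizedDiv D (fun Y => ∑ x, (p x : ℂ) • N x Y) (fun Y => ∑ x, (p x : ℂ) • M x Y) ≤
      ∑ x, (p x : EReal) * amortizedDiv D (N x) (M x) := by
  refine iSup_le fun R => iSup_le fun ρ => iSup_le fun σ => iSup_le fun hρ =>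
    iSup_le fun hσ => ?_
  rw [idTensor_sum_smul, idTensor_sum_smul]
  calc _ ≤ (∑ x, (p x : EReal) * D _ (idTensor (N x) ρ) (idTensor (M x) σ)) - D _ ρ σ :=
        EReal.sub_le_sub (hds.jointly_convex hdp hp hp1 (fun x => (hN x).isDensity_idTensor hρ)
          fun x => (hM x).isDensity_idTensor hσ) le_rfl
    _ ≤ ∑ x, (p x : EReal) * (D _ (idTensor (N x) ρ) (idTensor (M x) σ) - D _ ρ σ) :=
        EReal.sum_mul_sub_le hp hp1 _ _
    _ ≤ ∑ x, (p x : EReal) * amortizedDiv D (N x) (M x) :=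
        Finset.sum_le_sum fun x _ => mul_le_mul_of_nonneg_left
          (le_amortizedDiv D (N x) (M x) hρ hσ) (by exact_mod_cast hp x)

/-- If the generalized divergence has the direct-sum property, then the
amortized channel divergence is jointly convex. -/
theorem amortizedDiv_jointly_convex
    (D : DivFam) (hdp : DivDataProcessing D) (hds : DivDirectSum D)
    {X ι κ : Type} [Fintype X] [DecidableEq X]
    [Fintype ι] [DecidableEq ι] [Fintype κ] [DecidableEq κ]
    (p : X → ℝ) (hp : ∀ x, 0 ≤ p x) (hp1 : ∑ x, p x = 1)
    (N M : X → Matrix ι ι ℂ → Matrix κ κ ℂ)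
    (hN : ∀ x, IsChannel (N x)) (hM : ∀ x, IsChannel (M x)) :
    amortizedDiv D (fun Y => ∑ x, (p x : ℂ) • N x Y) (fun Y => ∑ x, (p x : ℂ) • M x Y) ≤
      ∑ x, (p x : EReal) * amortizedDiv D (N x) (M x) :=
  amortizedDiv_jointly_convex_general D hdp hds p hp hp1 N M hN hM

end
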